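/- Let P = ⋂_{j=1}^{N} {x ∈ ℝⁿ : ⟨q_j, x⟩ ≥ r_j} be a nonempty polyhedron. Then CoSp(q_1,…,q_N) = ⋃ {F*|P : F a nonempty face of P}. -/

import Mathlib

open scoped RealInnerProductSpace

noncomputable section

/-- A subset `F ⊆ P` is a face of `P` if there are `q ∈ ℝⁿ` and `ρ ∈ ℝ` with
`⟨q, u⟩ = ρ` for every `u ∈ F` and `ρ < ⟨q, y⟩` for every `y ∈ P \ F`. -/
def IsFace {n : ℕ} (P F : Set (EuclideanSpace ℝ (Fin n))) : Prop :=
  F ⊆ P ∧ ∃ (q : EuclideanSpace ℝ (Fin n)) (ρ : ℝ),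
    (∀ u ∈ F, ⟪q, u⟫ = ρ) ∧ ∀ y ∈ P \ F, ρ < ⟪q, y⟫

/-- The cone `F*|P` of a face `F` of `P`. -/
def coneOf {n : ℕ} (P F : Set (EuclideanSpace ℝ (Fin n))) :
    Set (EuclideanSpace ℝ (Fin n)) :=
  {q | ∃ ρ : ℝ, (∀ u ∈ F, ⟪q, u⟫ = ρ) ∧ ∀ y ∈ P \ F, ρ ≤ ⟪q, y⟫}

/-! If `x = ∑ cⱼ qⱼ` with `c ≥ 0`, then `⟪x, ·⟫ ≥ ∑ cⱼ rⱼ` on `P`; by LP duality this linear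
function attains its minimum on `P`, and the set of minimizers is a nonempty face whose cone
contains `x`. Conversely, `x` in the cone of a face is bounded below on `P`, and LP duality writes
it as a nonnegative combination of the `qⱼ`. LP duality in turn comes from Farkas' lemma, proved by
Fourier–Motzkin elimination. -/

open Finset

variable {E : Type*} [NormedAddCommGroup E] [InnerProductSpace ℝ E]

theorem inner_sub_smul_inner_div (u v y z : E) (d : ℝ) :
    ⟪v, y - (⟪u, y⟫ / d) • z⟫ = ⟪v - (⟪v, z⟫ / d) • u, y⟫ := by
  simp only [inner_sub_left, inner_sub_right, real_inner_smul_left, real_inner_smul_right,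
    real_inner_comm z v]
  ring

theorem exists_nonneg_sum_smul_eq_of_inner_nonneg {N : ℕ} (a : Fin N → E) (x : E)
    (h : ∀ y, (∀ i, 0 ≤ ⟪a i, y⟫) → 0 ≤ ⟪x, y⟫) :
    ∃ c : Fin N → ℝ, (∀ i, 0 ≤ c i) ∧ x = ∑ i, c i • a i := by
  induction N generalizing x with
  | zero =>
    have hx : ⟪x, -x⟫ = 0 := le_antisymm (by simp) (h (-x) finZeroElim)
    exact ⟨0, fun _ => le_rfl, by simpa using hx⟩
  | succ N ih =>
    by_cases htail : ∀ y, (∀ i, 0 ≤ ⟪a (Fin.succ i), y⟫) → 0 ≤ ⟪x, y⟫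
    · obtain ⟨c, hc, hx⟩ := ih (fun i => a i.succ) x htail
      exact ⟨Fin.cons 0 c, Fin.cases le_rfl hc, by simpa [Fin.sum_univ_succ] using hx⟩
    push Not at htail
    obtain ⟨z, hz, hxz⟩ := htail
    set d := ⟪a 0, z⟫
    have hd : d < 0 := by
      by_contra! hd
      exact hxz.not_ge (h z (Fin.cases hd hz))
    -- Eliminate `a 0` by projecting along `z` onto the hyperplane `⟪a 0, ·⟫ = 0`.
    set π : E → E := fun v => v - (⟪v, z⟫ / d) • a 0
    have hπ0 : π (a 0) = 0 := by
      change a 0 - (d / d) • a 0 = 0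
      rw [div_self hd.ne, one_smul, sub_self]
    obtain ⟨c, hc, hx⟩ := ih (fun i => π (a i.succ)) (π x) fun y hy => by
      have := h (y - (⟪a 0, y⟫ / d) • z) <| Fin.cases
        (by rw [inner_sub_smul_inner_div]; change 0 ≤ ⟪π (a 0), y⟫; rw [hπ0, inner_zero_left])
        fun i => by simpa [inner_sub_smul_inner_div] using hy i
      rwa [inner_sub_smul_inner_div] at this
    set t : Fin N → ℝ := fun i => ⟪a i.succ, z⟫ / d
    have hct : ∑ i, c i * t i ≤ 0 := sum_nonpos fun i _ =>
      mul_nonpos_of_nonneg_of_nonpos (hc i) (div_nonpos_of_nonneg_of_nonpos (hz i) hd.le)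
    have hμ : 0 < ⟪x, z⟫ / d := div_pos_of_neg_of_neg hxz hd
    refine ⟨Fin.cons (⟪x, z⟫ / d - ∑ i, c i * t i) c,
      Fin.cases (by rw [Fin.cons_zero]; linarith) hc, ?_⟩
    simp only [π, smul_sub, smul_smul, sum_sub_distrib, ← sum_smul] at hx
    rw [Fin.sum_univ_succ, Fin.cons_zero]
    simp only [Fin.cons_succ]
    linear_combination (norm := module) hx

def polyhedron {N : ℕ} (q : Fin N → E) (r : Fin N → ℝ) : Set E := {y | ∀ j, r j ≤ ⟪q j, y⟫}

theorem exists_nonneg_sum_smul_eq_zero_of_polyhedron_eq_empty {N : ℕ} (a : Fin N → E)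
    (b : Fin N → ℝ) (h : polyhedron a b = ∅) :
    ∃ c : Fin N → ℝ, (∀ i, 0 ≤ c i) ∧ ∑ i, c i • a i = 0 ∧ ∑ i, c i * b i = 1 := by
  -- Homogenize: `(0, -1)` is nonnegative on the cone dual to the vectors `(a i, -b i)`.
  obtain ⟨c, hc, hsum⟩ := exists_nonneg_sum_smul_eq_of_inner_nonneg
    (fun i => WithLp.toLp 2 (a i, -b i)) (WithLp.toLp 2 ((0 : E), (-1 : ℝ))) <| by
      rintro ⟨y, t⟩ hyt
      simp only [WithLp.prod_inner_apply, RCLike.inner_apply, conj_trivial,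
        inner_zero_left] at hyt ⊢
      by_contra! ht
      replace ht : 0 < t := by linarith
      have hmem : t⁻¹ • y ∈ polyhedron a b := fun i => by
        rw [real_inner_smul_right, le_inv_mul_iff₀ ht]
        linarith [hyt i]
      simp [h] at hmem
  have := congrArg WithLp.ofLp hsum
  simp only [WithLp.ofLp_sum, WithLp.ofLp_smul, Prod.ext_iff, Prod.fst_sum, Prod.snd_sum,
    Prod.smul_fst, Prod.smul_snd, smul_eq_mul, mul_neg, sum_neg_distrib, neg_inj] at this
  exact ⟨c, hc, this.1.symm, this.2.symm⟩

theorem sum_mul_le_inner_sum_smul {N : ℕ} {q : Fin N → E} {r : Fin N → ℝ} {y : E}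
    (hy : y ∈ polyhedron q r) {c : Fin N → ℝ} (hc : ∀ j, 0 ≤ c j) :
    ∑ j, c j * r j ≤ ⟪∑ j, c j • q j, y⟫ := by
  rw [sum_inner]
  exact sum_le_sum fun j _ => (real_inner_smul_left (q j) y (c j)).symm ▸
    mul_le_mul_of_nonneg_left (hy j) (hc j)

theorem exists_nonneg_sum_smul_eq_of_lt_inner {N : ℕ} {q : Fin N → E} {r : Fin N → ℝ}
    (hne : (polyhedron q r).Nonempty) {x : E} {m : ℝ}
    (h : ∀ y ∈ polyhedron q r, m < ⟪x, y⟫) :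
    ∃ c : Fin N → ℝ, (∀ j, 0 ≤ c j) ∧ x = ∑ j, c j • q j ∧ m < ∑ j, c j * r j := by
  -- Farkas applied to the empty polyhedron `P ∩ {y | ⟪x, y⟫ ≤ m}`; nonemptiness of `P` forces
  -- the certificate's weight on `-x` to be positive, and rescaling by it gives `c`.
  obtain ⟨c, hc, hsum, hval⟩ :=
    exists_nonneg_sum_smul_eq_zero_of_polyhedron_eq_empty (Fin.cons (-x) q) (Fin.cons (-m) r) <|
      Set.eq_empty_of_forall_notMem fun y hy => by
        have := hy 0
        simp only [Fin.cons_zero, inner_neg_left, neg_le_neg_iff] at this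
        exact (h y fun j => by simpa using hy j.succ).not_ge this
  simp only [Fin.sum_univ_succ, Fin.cons_zero, Fin.cons_succ, smul_neg, mul_neg] at hsum hval
  rw [neg_add_eq_zero] at hsum
  obtain ⟨y₀, hy₀⟩ := hne
  have hweak := sum_mul_le_inner_sum_smul hy₀ fun j => hc j.succ
  rw [← hsum, real_inner_smul_left] at hweak
  have hμ : 0 < c 0 := (hc 0).lt_of_ne fun h0 => by
    rw [← h0] at hval hweak
    linarith
  refine ⟨fun j => (c 0)⁻¹ * c j.succ, fun j => mul_nonneg (inv_nonneg.2 hμ.le) (hc j.succ), ?_, ?_⟩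
  · simp only [mul_smul, ← smul_sum, ← hsum, inv_smul_smul₀ hμ.ne']
  · simp only [mul_assoc, ← mul_sum]
    rw [lt_inv_mul_iff₀ hμ]
    linarith

theorem exists_isMinOn_inner {N : ℕ} {q : Fin N → E} {r : Fin N → ℝ}
    (hne : (polyhedron q r).Nonempty) {x : E}
    (hbdd : BddBelow ((fun y => ⟪x, y⟫) '' polyhedron q r)) :
    ∃ y ∈ polyhedron q r, IsMinOn (fun y => ⟪x, y⟫) (polyhedron q r) y := by
  set m := sInf ((fun y => ⟪x, y⟫) '' polyhedron q r)
  have hm : ∀ y ∈ polyhedron q r, m ≤ ⟪x, y⟫ := fun y hy => csInf_le hbdd ⟨y, hy, rfl⟩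
  by_contra! hmin
  obtain ⟨c, hc, rfl, hcm⟩ := exists_nonneg_sum_smul_eq_of_lt_inner hne fun y hy =>
    (hm y hy).lt_of_ne fun hy' => hmin y hy fun z hz => (hy' ▸ hm z hz :)
  exact hcm.not_ge <| le_csInf (hne.image _) <| Set.forall_mem_image.2 fun y hy =>
    sum_mul_le_inner_sum_smul hy hc

theorem exists_isFace_mem_coneOf_of_isMinOn {n : ℕ} {P : Set (EuclideanSpace ℝ (Fin n))}
    {x y₀ : EuclideanSpace ℝ (Fin n)} (hy₀ : y₀ ∈ P) (hmin : IsMinOn (fun y => ⟪x, y⟫) P y₀) :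
    ∃ F, IsFace P F ∧ F.Nonempty ∧ x ∈ coneOf P F := by
  refine ⟨{y ∈ P | ⟪x, y⟫ = ⟪x, y₀⟫}, ⟨fun y hy => hy.1, x, ⟪x, y₀⟫, fun y hy => hy.2, ?_⟩,
    ⟨y₀, hy₀, rfl⟩, ⟪x, y₀⟫, fun y hy => hy.2, fun y hy => hmin hy.1⟩
  rintro y ⟨hy, hyF⟩
  exact (hmin hy).lt_of_ne fun h => hyF ⟨hy, h.symm⟩

theorem exists_forall_le_inner_of_mem_coneOf {n : ℕ} {P F : Set (EuclideanSpace ℝ (Fin n))}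
    {x : EuclideanSpace ℝ (Fin n)} (hx : x ∈ coneOf P F) : ∃ ρ, ∀ y ∈ P, ρ ≤ ⟪x, y⟫ := by
  obtain ⟨ρ, hF, hP⟩ := hx
  exact ⟨ρ, fun y hy =>
    (em (y ∈ F)).elim (fun hyF => (hF y hyF).ge) fun hyF => hP y ⟨hy, hyF⟩⟩

/-- For a nonempty polyhedron `P = ⋂ⱼ {x : ⟨qⱼ, x⟩ ≥ rⱼ}`,
`CoSp(q₁,…,q_N) = ⋃ {F*|P : F a nonempty face of P}`. -/
theorem stmt9 {n N : ℕ} (q : Fin N → EuclideanSpace ℝ (Fin n)) (r : Fin N → ℝ)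
    (P : Set (EuclideanSpace ℝ (Fin n)))
    (hP : P = {x | ∀ j, r j ≤ ⟪q j, x⟫}) (hne : P.Nonempty) :
    {x | ∃ c : Fin N → ℝ, (∀ j, 0 ≤ c j) ∧ x = ∑ j, c j • q j} =
      {x | ∃ F, IsFace P F ∧ F.Nonempty ∧ x ∈ coneOf P F} := by
  change P = polyhedron q r at hP
  subst hP
  ext x
  constructor
  · rintro ⟨c, hc, rfl⟩
    obtain ⟨y₀, hy₀, hmin⟩ := exists_isMinOn_inner hne
      ⟨_, Set.forall_mem_image.2 fun y hy => sum_mul_le_inner_sum_smul hy hc⟩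
    exact exists_isFace_mem_coneOf_of_isMinOn hy₀ hmin
  · rintro ⟨F, -, -, hx⟩
    obtain ⟨ρ, hρ⟩ := exists_forall_le_inner_of_mem_coneOf hx
    obtain ⟨c, hc, hxc, -⟩ := exists_nonneg_sum_smul_eq_of_lt_inner hne fun y hy =>
      (sub_one_lt ρ).trans_le (hρ y hy)
    exact ⟨c, hc, hxc⟩
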